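/- arXiv:1809.03136 — 2 statements merged into one kernel-verified Lean document; each statement's English description precedes it below -/
import Mathlib

section
/- Let Ω ⊆ ℝ³ be a bounded open set and let w : ℝ³ → ℝ³ be a smooth vector field whose helicity density h = w · (curl w) is nonzero at every point of Ω. Suppose that for every point x ∈ Ω there exist an open neighborhood U ⊆ Ω of x and smooth functions ℓ, ψ, θ : U → ℝ such that on U: w = cos θ ∇ψ + sin θ ∇ℓ, cos θ · sin θ · (|∇ψ|² − |∇ℓ|²) = (∇ℓ · ∇ψ)(cos²θ − sin²θ), and sin θ (∇ℓ · ∇θ) + cos θ (∇ψ · ∇θ) = 0. Then w × (curl w) = 0 on Ω, i.e. w is a Beltrami field in Ω. -/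
noncomputable section

abbrev R3 : Type := Fin 3 → ℝ

/-- Euclidean dot product on ℝ³. -/
def dot3 (u v : R3) : ℝ := u 0 * v 0 + u 1 * v 1 + u 2 * v 2

/-- Cross product on ℝ³. -/
def cross3 (u v : R3) : R3 :=
  ![u 1 * v 2 - u 2 * v 1, u 2 * v 0 - u 0 * v 2, u 0 * v 1 - u 1 * v 0]

/-- Euclidean norm on ℝ³. -/
def norm3 (u : R3) : ℝ := Real.sqrt (dot3 u u)

/-- Partial derivative of a scalar field in the `i`-th coordinate direction. -/
def pd (i : Fin 3) (f : R3 → ℝ) (x : R3) : ℝ := fderiv ℝ f x (Pi.single i 1)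

/-- Gradient of a scalar field. -/
def grad3 (f : R3 → ℝ) (x : R3) : R3 := fun i => pd i f x

/-- Curl of a vector field. -/
def curl3 (w : R3 → R3) (x : R3) : R3 :=
  ![pd 1 (fun y => w y 2) x - pd 2 (fun y => w y 1) x,
    pd 2 (fun y => w y 0) x - pd 0 (fun y => w y 2) x,
    pd 0 (fun y => w y 1) x - pd 1 (fun y => w y 0) x]

/-- Divergence of a vector field. -/
def div3 (w : R3 → R3) (x : R3) : ℝ :=
  pd 0 (fun y => w y 0) x + pd 1 (fun y => w y 1) x + pd 2 (fun y => w y 2) x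

/-- Laplacian of a scalar field. -/
def lap3 (f : R3 → ℝ) (x : R3) : ℝ := div3 (grad3 f) x

/-!
Near each point write `w = cos θ ∇ψ + sin θ ∇ℓ`. Since a gradient has no curl,
`curl w = ∇(cos θ) × ∇ψ + ∇(sin θ) × ∇ℓ = ∇θ × v` with `v = -sin θ ∇ψ + cos θ ∇ℓ`,
and the vector triple product gives `w × (∇θ × v) = (w · v) ∇θ - (w · ∇θ) v`.
The two scalar conditions of the representation say precisely `w · v = 0` and `w · ∇θ = 0`.
-/

open Matrix Filter Topology

lemma cross3_eq_crossProduct (u v : R3) : cross3 u v = u ⨯₃ v := rfl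

lemma dot3_eq_dotProduct (u v : R3) : dot3 u v = u ⬝ᵥ v := (vec3_dotProduct u v).symm

lemma cross3_cross3_eq_zero {u t v : R3} (ht : dot3 u t = 0) (hv : dot3 u v = 0) :
    cross3 u (cross3 t v) = 0 := by
  rw [cross3_eq_crossProduct, cross3_eq_crossProduct, cross_cross_eq_smul_sub_smul',
    ← dot3_eq_dotProduct, hv, dotProduct_comm, ← dot3_eq_dotProduct, ht, zero_smul, zero_smul,
    sub_zero]

section Calculus

variable {f g : R3 → ℝ} {x : R3}

lemma pd_congr_of_eventuallyEq (h : f =ᶠ[𝓝 x] g) (i : Fin 3) : pd i f x = pd i g x := by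
  rw [pd, pd, h.fderiv_eq]

lemma pd_add (hf : DifferentiableAt ℝ f x) (hg : DifferentiableAt ℝ g x) (i : Fin 3) :
    pd i (fun y => f y + g y) x = pd i f x + pd i g x := by
  rw [pd, fderiv_fun_add hf hg]
  rfl

lemma pd_mul (hf : DifferentiableAt ℝ f x) (hg : DifferentiableAt ℝ g x) (i : Fin 3) :
    pd i (fun y => f y * g y) x = pd i f x * g x + f x * pd i g x := by
  rw [pd, fderiv_fun_mul hf hg]
  simp only [pd, _root_.add_apply, _root_.smul_apply, smul_eq_mul]
  ring

lemma grad3_comp_of_hasDerivAt {φ : ℝ → ℝ} {φ' : ℝ} (hφ : HasDerivAt φ φ' (f x))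
    (hf : DifferentiableAt ℝ f x) : grad3 (fun y => φ (f y)) x = φ' • grad3 f x := by
  ext i
  simp only [grad3, pd, Pi.smul_apply, smul_eq_mul]
  rw [show (fun y => φ (f y)) = φ ∘ f from rfl,
    (hφ.comp_hasFDerivAt x hf.hasFDerivAt).fderiv]
  rfl

lemma differentiableAt_fderiv_of_contDiffAt_two (hg : ContDiffAt ℝ 2 g x) :
    DifferentiableAt ℝ (fderiv ℝ g) x :=
  (hg.fderiv_right (m := 1) (by norm_num)).differentiableAt (by norm_num)

lemma differentiableAt_pd (hg : ContDiffAt ℝ 2 g x) (j : Fin 3) :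
    DifferentiableAt ℝ (pd j g) x :=
  (differentiableAt_fderiv_of_contDiffAt_two hg).clm_apply (differentiableAt_const _)

lemma pd_pd_comm (hg : ContDiffAt ℝ 2 g x) (i j : Fin 3) :
    pd i (pd j g) x = pd j (pd i g) x := by
  have hg' := differentiableAt_fderiv_of_contDiffAt_two hg
  have hpd : ∀ k : Fin 3, pd k g = fun y => fderiv ℝ g y (Pi.single k 1) := fun _ => rfl
  simp only [pd, hpd, fderiv_clm_apply hg' (differentiableAt_const _)]
  simpa using hg.isSymmSndFDerivAt (by simp) (Pi.single i 1) (Pi.single j 1)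

end Calculus

section Curl

variable {u v : R3 → R3} {f g : R3 → ℝ} {x : R3}

lemma curl3_congr_of_eventuallyEq (h : u =ᶠ[𝓝 x] v) : curl3 u x = curl3 v x := by
  have hc : ∀ j : Fin 3, (fun y => u y j) =ᶠ[𝓝 x] fun y => v y j := fun j =>
    h.mono fun y hy => by simp only [hy]
  simp only [curl3, pd_congr_of_eventuallyEq (hc _)]

lemma curl3_add (hu : ∀ j, DifferentiableAt ℝ (fun y => u y j) x)
    (hv : ∀ j, DifferentiableAt ℝ (fun y => v y j) x) :
    curl3 (u + v) x = curl3 u x + curl3 v x := by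
  simp only [curl3, Pi.add_apply, pd_add (hu _) (hv _), vec3_add]
  apply vec3_eq <;> ring

lemma differentiableAt_smul_grad3_apply (hf : DifferentiableAt ℝ f x)
    (hg : ContDiffAt ℝ 2 g x) (j : Fin 3) :
    DifferentiableAt ℝ (fun y => (f y • grad3 g y) j) x :=
  hf.mul (differentiableAt_pd hg j)

lemma curl3_smul_grad3 (hf : DifferentiableAt ℝ f x) (hg : ContDiffAt ℝ 2 g x) :
    curl3 (fun y => f y • grad3 g y) x = cross3 (grad3 f x) (grad3 g x) := by
  have hpd : ∀ i j : Fin 3, pd i (fun y => (f y • grad3 g y) j) x =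
      pd i f x * pd j g x + f x * pd i (pd j g) x := fun i j =>
    pd_mul hf (differentiableAt_pd hg j) i
  simp only [curl3, cross3, hpd, grad3, pd_pd_comm hg 0 1, pd_pd_comm hg 0 2,
    pd_pd_comm hg 1 2]
  apply vec3_eq <;> ring

lemma curl3_cos_smul_grad3_add_sin_smul_grad3 {ψ ℓ θ : R3 → ℝ} (hψ : ContDiffAt ℝ 2 ψ x)
    (hℓ : ContDiffAt ℝ 2 ℓ x) (hθ : DifferentiableAt ℝ θ x) :
    curl3 (fun y => Real.cos (θ y) • grad3 ψ y + Real.sin (θ y) • grad3 ℓ y) x =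
      cross3 (grad3 θ x) (-Real.sin (θ x) • grad3 ψ x + Real.cos (θ x) • grad3 ℓ x) := by
  have hcos := hθ.cos
  have hsin := hθ.sin
  rw [show (fun y => Real.cos (θ y) • grad3 ψ y + Real.sin (θ y) • grad3 ℓ y) =
      (fun y => Real.cos (θ y) • grad3 ψ y) + fun y => Real.sin (θ y) • grad3 ℓ y from rfl,
    curl3_add (differentiableAt_smul_grad3_apply hcos hψ)
      (differentiableAt_smul_grad3_apply hsin hℓ),
    curl3_smul_grad3 hcos hψ, curl3_smul_grad3 hsin hℓ,
    grad3_comp_of_hasDerivAt (Real.hasDerivAt_cos _) hθ,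
    grad3_comp_of_hasDerivAt (Real.hasDerivAt_sin _) hθ]
  simp only [cross3_eq_crossProduct, map_add, map_smul, LinearMap.smul_apply]

end Curl

theorem beltrami_of_local_representation_general
    (Ω : Set R3) (w : R3 → R3)
    (hloc : ∀ x ∈ Ω, ∃ U : Set R3, IsOpen U ∧ x ∈ U ∧ U ⊆ Ω ∧
      ∃ ℓ ψ θ : R3 → ℝ,
        ContDiffOn ℝ (⊤ : ℕ∞) ℓ U ∧ ContDiffOn ℝ (⊤ : ℕ∞) ψ U ∧
        ContDiffOn ℝ (⊤ : ℕ∞) θ U ∧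
        ∀ y ∈ U,
          w y = Real.cos (θ y) • grad3 ψ y + Real.sin (θ y) • grad3 ℓ y ∧
          Real.cos (θ y) * Real.sin (θ y) *
              (dot3 (grad3 ψ y) (grad3 ψ y) - dot3 (grad3 ℓ y) (grad3 ℓ y)) =
            dot3 (grad3 ℓ y) (grad3 ψ y) * (Real.cos (θ y) ^ 2 - Real.sin (θ y) ^ 2) ∧
          Real.sin (θ y) * dot3 (grad3 ℓ y) (grad3 θ y) +
            Real.cos (θ y) * dot3 (grad3 ψ y) (grad3 θ y) = 0) :
    ∀ x ∈ Ω, cross3 (w x) (curl3 w x) = 0 := by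
  intro x hx
  obtain ⟨U, hUopen, hxU, -, ℓ, ψ, θ, hℓ, hψ, hθ, hrep⟩ := hloc x hx
  have hU : U ∈ 𝓝 x := hUopen.mem_nhds hxU
  have htwo : (2 : WithTop ℕ∞) ≤ (⊤ : ℕ∞) := WithTop.coe_le_coe.mpr le_top
  have hcurl : curl3 w x = cross3 (grad3 θ x)
      (-Real.sin (θ x) • grad3 ψ x + Real.cos (θ x) • grad3 ℓ x) := by
    rw [curl3_congr_of_eventuallyEq (eventually_of_mem hU fun y hy => (hrep y hy).1)]
    exact curl3_cos_smul_grad3_add_sin_smul_grad3 ((hψ.contDiffAt hU).of_le htwo)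
      ((hℓ.contDiffAt hU).of_le htwo) ((hθ.contDiffAt hU).differentiableAt (by simp))
  obtain ⟨hwx, hortho, hlevel⟩ := hrep x hxU
  rw [hcurl, hwx]
  apply cross3_cross3_eq_zero
  · simp only [dot3_eq_dotProduct, add_dotProduct, smul_dotProduct, smul_eq_mul] at hlevel ⊢
    linear_combination hlevel
  · simp only [dot3_eq_dotProduct, add_dotProduct, dotProduct_add, smul_dotProduct,
      dotProduct_smul, smul_eq_mul] at hortho ⊢
    rw [dotProduct_comm (grad3 ℓ x) (grad3 ψ x)] at hortho ⊢
    linear_combination -hortho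

/-- Local representation theorem for Beltrami fields (sufficiency direction). -/
theorem beltrami_of_local_representation
    (Ω : Set R3) (hΩopen : IsOpen Ω) (hΩbdd : Bornology.IsBounded Ω)
    (w : R3 → R3) (hw : ContDiff ℝ (⊤ : ℕ∞) w)
    (hhel : ∀ x ∈ Ω, dot3 (w x) (curl3 w x) ≠ 0)
    (hloc : ∀ x ∈ Ω, ∃ U : Set R3, IsOpen U ∧ x ∈ U ∧ U ⊆ Ω ∧
      ∃ ℓ ψ θ : R3 → ℝ,
        ContDiffOn ℝ (⊤ : ℕ∞) ℓ U ∧ ContDiffOn ℝ (⊤ : ℕ∞) ψ U ∧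
        ContDiffOn ℝ (⊤ : ℕ∞) θ U ∧
        ∀ y ∈ U,
          w y = Real.cos (θ y) • grad3 ψ y + Real.sin (θ y) • grad3 ℓ y ∧
          Real.cos (θ y) * Real.sin (θ y) *
              (dot3 (grad3 ψ y) (grad3 ψ y) - dot3 (grad3 ℓ y) (grad3 ℓ y)) =
            dot3 (grad3 ℓ y) (grad3 ψ y) * (Real.cos (θ y) ^ 2 - Real.sin (θ y) ^ 2) ∧
          Real.sin (θ y) * dot3 (grad3 ℓ y) (grad3 θ y) +
            Real.cos (θ y) * dot3 (grad3 ψ y) (grad3 θ y) = 0) :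
    ∀ x ∈ Ω, cross3 (w x) (curl3 w x) = 0 :=
  beltrami_of_local_representation_general Ω w hloc
end
end

section
/- Define the vector field w : ℝ³ → ℝ³ by w(x, y, z) = ( (1/√2) cos(e^{x+y}/√2), −(1/√2) cos(e^{x+y}/√2), sin(e^{x+y}/√2) ), i.e. w = (1/√2) cos(e^{x+y}/√2) ∇(x − y) + sin(e^{x+y}/√2) ∇z. Then curl w = e^{x+y} w on ℝ³ (so w is a Beltrami field with inhomogeneous proportionality factor e^{x+y}) and div w = 0 on ℝ³. -/
noncomputable section

/-!
`w` depends on `(x, y, z)` only through `s = x + y`, so on its components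
`∂ₓ = ∂_y = d/ds` and `∂_z = 0`. For any profile `θ`, the field
`((1/√2) cos θ(s), -(1/√2) cos θ(s), sin θ(s))` then has curl `√2 θ'(s)` times itself and
divergence `0`; taking `θ(s) = e^s / √2` makes the factor `e^s`.
-/

open Real

lemma pd_comp_clm (ℓ : R3 →L[ℝ] ℝ) {f : ℝ → ℝ} {f' : ℝ} {x : R3} (hf : HasDerivAt f f' (ℓ x))
    (i : Fin 3) : pd i (fun p => f (ℓ p)) x = f' * ℓ (Pi.single i 1) :=
  congrArg (· (Pi.single i 1)) (hf.comp_hasFDerivAt x ℓ.hasFDerivAt).fderiv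

def sumXY : R3 →L[ℝ] ℝ :=
  ContinuousLinearMap.proj (R := ℝ) (φ := fun _ : Fin 3 => ℝ) 0 +
    ContinuousLinearMap.proj (R := ℝ) (φ := fun _ : Fin 3 => ℝ) 1

section FieldsOfXPlusY

variable {F : ℝ → R3} {F' : R3} {x : R3}

lemma pd_comp_sumXY (hF : ∀ j, HasDerivAt (fun s => F s j) (F' j) (x 0 + x 1)) (i j : Fin 3) :
    pd i (fun p => F (p 0 + p 1) j) x = F' j * sumXY (Pi.single i 1) :=
  pd_comp_clm sumXY (hF j) i

lemma curl3_comp_add (hF : ∀ j, HasDerivAt (fun s => F s j) (F' j) (x 0 + x 1)) :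
    curl3 (fun p => F (p 0 + p 1)) x = ![F' 2, -F' 2, F' 1 - F' 0] := by
  simp [curl3, pd_comp_sumXY hF, sumXY]

lemma div3_comp_add (hF : ∀ j, HasDerivAt (fun s => F s j) (F' j) (x 0 + x 1)) :
    div3 (fun p => F (p 0 + p 1)) x = F' 0 + F' 1 := by
  simp [div3, pd_comp_sumXY hF, sumXY]

end FieldsOfXPlusY

def beltramiProfile (θ : ℝ → ℝ) (s : ℝ) : R3 :=
  ![(1 / √2) * cos (θ s), -(1 / √2) * cos (θ s), sin (θ s)]

section Profile

variable {θ : ℝ → ℝ} {θ' s : ℝ}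

lemma hasDerivAt_beltramiProfile (hθ : HasDerivAt θ θ' s) (j : Fin 3) :
    HasDerivAt (fun t => beltramiProfile θ t j)
      (![-(1 / √2) * sin (θ s) * θ', (1 / √2) * sin (θ s) * θ', cos (θ s) * θ'] j) s := by
  fin_cases j
  · simpa [beltramiProfile, mul_assoc] using hθ.cos.const_mul (1 / √2)
  · simpa [beltramiProfile, mul_assoc] using hθ.cos.const_mul (-(1 / √2))
  · simpa [beltramiProfile] using hθ.sin

lemma curl3_beltramiProfile {x : R3} (hθ : HasDerivAt θ θ' (x 0 + x 1)) :
    curl3 (fun p => beltramiProfile θ (p 0 + p 1)) x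
      = (√2 * θ') • beltramiProfile θ (x 0 + x 1) := by
  rw [curl3_comp_add (hasDerivAt_beltramiProfile hθ)]
  ext j
  fin_cases j <;> simp [beltramiProfile] <;> field_simp
  rw [sq_sqrt zero_le_two]
  ring

lemma div3_beltramiProfile {x : R3} (hθ : HasDerivAt θ θ' (x 0 + x 1)) :
    div3 (fun p => beltramiProfile θ (p 0 + p 1)) x = 0 := by
  rw [div3_comp_add (hasDerivAt_beltramiProfile hθ)]
  simp

end Profile

/-- A solenoidal Beltrami field with inhomogeneous proportionality factor `e^{x+y}`. -/
theorem exponential_beltrami_field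
    (w : R3 → R3)
    (hw : w = fun p =>
      ![(1 / Real.sqrt 2) * Real.cos (Real.exp (p 0 + p 1) / Real.sqrt 2),
        -(1 / Real.sqrt 2) * Real.cos (Real.exp (p 0 + p 1) / Real.sqrt 2),
        Real.sin (Real.exp (p 0 + p 1) / Real.sqrt 2)]) :
    ∀ p : R3,
      curl3 w p = Real.exp (p 0 + p 1) • w p ∧ div3 w p = 0 := by
  intro p
  have hw' : w = fun p => beltramiProfile (fun s => exp s / √2) (p 0 + p 1) := hw
  subst hw'
  have hθ := (hasDerivAt_exp (p 0 + p 1)).div_const √2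
  have hfactor : √2 * (exp (p 0 + p 1) / √2) = exp (p 0 + p 1) :=
    mul_div_cancel₀ _ (sqrt_ne_zero'.2 zero_lt_two)
  exact ⟨hfactor ▸ curl3_beltramiProfile hθ, div3_beltramiProfile hθ⟩
end
end
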